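/- For the quadratic function E(λ) = 2 s₀⁻¹ (1-λ)² / (1 - 2 s₂⁻¹ λ²) defined for λ ∈ (-√(s₂/2), √(s₂/2)), where 0 < s₀ < 1 and s₂ = 1 - s₀, the minimum is attained at λ = s₂/2, and the minimum value equals s₀⁻¹ + 1. -/

import Mathlib

/-!
With `s₀ = 1 - s₂`, one has the identity
`2 s₂ (1 - λ)² = (1 + s₀) (s₂ - 2 λ²) + (2 λ - s₂)²`,
so `E(λ) = s₀⁻¹ + 1 + (2 λ - s₂)² / (s₀ (s₂ - 2 λ²))`. On `2 λ² < s₂` the last term is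
nonnegative and it vanishes exactly at `λ = s₂ / 2`.
-/

noncomputable def energy (s₀ s₂ l : ℝ) : ℝ :=
  2 * s₀⁻¹ * (1 - l) ^ 2 / (1 - 2 * s₂⁻¹ * l ^ 2)

section

variable {s₀ s₂ l : ℝ}

theorem energy_eq_add_sq_div (hs₀ : s₀ ≠ 0) (hs₂ : s₂ ≠ 0) (hsum : s₂ = 1 - s₀)
    (hl : s₂ - 2 * l ^ 2 ≠ 0) :
    energy s₀ s₂ l = s₀⁻¹ + 1 + (2 * l - s₂) ^ 2 / (s₀ * (s₂ - 2 * l ^ 2)) := by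
  have hden : 1 - 2 * s₂⁻¹ * l ^ 2 = (s₂ - 2 * l ^ 2) / s₂ := by field_simp
  rw [energy, hden]
  field_simp
  rw [hsum]
  ring

theorem energy_half (hs₀ : 0 < s₀) (hs₂ : 0 < s₂) (hsum : s₂ = 1 - s₀) :
    energy s₀ s₂ (s₂ / 2) = s₀⁻¹ + 1 := by
  have hden : s₂ - 2 * (s₂ / 2) ^ 2 = s₂ * (1 - s₂ / 2) := by ring
  have hden_pos : 0 < s₂ * (1 - s₂ / 2) := mul_pos hs₂ (by linarith)
  have hcentre : 2 * (s₂ / 2) - s₂ = 0 := by ring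
  rw [energy_eq_add_sq_div hs₀.ne' hs₂.ne' hsum (hden ▸ hden_pos.ne'), hcentre]
  simp

theorem inv_add_one_le_energy (hs₀ : 0 < s₀) (hsum : s₂ = 1 - s₀) (hl : 2 * l ^ 2 < s₂) :
    s₀⁻¹ + 1 ≤ energy s₀ s₂ l := by
  have hden : 0 < s₂ - 2 * l ^ 2 := sub_pos.mpr hl
  have hs₂ : 0 < s₂ := lt_of_le_of_lt (by positivity) hl
  rw [energy_eq_add_sq_div hs₀.ne' hs₂.ne' hsum hden.ne']
  have hgap : 0 ≤ (2 * l - s₂) ^ 2 / (s₀ * (s₂ - 2 * l ^ 2)) := by positivity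
  linarith

end

/-- For `E(λ) = 2 s₀⁻¹ (1-λ)² / (1 - 2 s₂⁻¹ λ²)` on `|λ| < √(s₂/2)`, with
`0 < s₀ < 1` and `s₂ = 1 - s₀`, the minimum is attained at `λ = s₂/2` and equals
`s₀⁻¹ + 1`. -/
theorem stmt_3 (s₀ s₂ : ℝ) (hs₀ : 0 < s₀) (hs₀' : s₀ < 1) (hs₂ : s₂ = 1 - s₀)
    (E : ℝ → ℝ)
    (hE : ∀ l : ℝ, E l = 2 * s₀⁻¹ * (1 - l) ^ 2 / (1 - 2 * s₂⁻¹ * l ^ 2)) :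
    E (s₂ / 2) = s₀⁻¹ + 1 ∧
    ∀ l : ℝ, |l| < Real.sqrt (s₂ / 2) → E (s₂ / 2) ≤ E l := by
  obtain rfl : E = energy s₀ s₂ := funext hE
  have hmin : energy s₀ s₂ (s₂ / 2) = s₀⁻¹ + 1 := energy_half hs₀ (by linarith) hs₂
  refine ⟨hmin, fun l hl => hmin ▸ inv_add_one_le_energy hs₀ hs₂ ?_⟩
  have hl_sq : |l| ^ 2 < s₂ / 2 := (Real.lt_sqrt (abs_nonneg l)).mp hl
  rw [sq_abs] at hl_sq
  linarith
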